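/- arXiv:1911.01470 — 5 statements merged into one kernel-verified Lean document; each statement's English description precedes it below -/
import Mathlib

section
/- If S is unitary in the sense that ∑_x S_{ax} · conj(S_{bx}) = δ_{a,b} for all a, b, then the Verlinde formula holds: for all a, b, c ∈ 𝒞, the fusion multiplicity N_{ab}^c, viewed as a complex number, equals ∑_x S_{ax} S_{bx} S_{c̄x} / S_{1x}. -/
/-- If `S` is unitary, satisfies the conjugation symmetry and
nondegeneracy, and the fusion–character relation holds, then the Verlinde
formula holds: `N a b c = ∑ x, S a x * S b x * S (bar c) x / S 1 x`. -/
theorem verlinde_stmt5 {𝒞 : Type*} [Fintype 𝒞] [DecidableEq 𝒞]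
    (one : 𝒞) (bar : 𝒞 → 𝒞)
    (hbar_one : bar one = one) (hbar_invol : ∀ a, bar (bar a) = a)
    (N : 𝒞 → 𝒞 → 𝒞 → ℕ)
    (S : 𝒞 → 𝒞 → ℂ)
    (hS_conj : ∀ a b, S a b = (starRingEnd ℂ) (S (bar a) b))
    (hS_nd : ∀ x, S one x ≠ 0)
    (hfus : ∀ a b x, ∑ c, (N a b c : ℂ) * S c x = S a x * S b x / S one x)
    (hunitary : ∀ a b, ∑ x, S a x * (starRingEnd ℂ) (S b x) = if a = b then 1 else 0) :
    ∀ a b c, (N a b c : ℂ) = ∑ x, S a x * S b x * S (bar c) x / S one x := by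
  intro a b c
  have hbar : ∀ x, S (bar c) x = (starRingEnd ℂ) (S c x) := by
    intro x
    rw [hS_conj c x, Complex.conj_conj]
  calc (N a b c : ℂ)
      = ∑ d, (N a b d : ℂ) * (if d = c then 1 else 0) := by
        simp [Finset.sum_ite_eq]
    _ = ∑ d, (N a b d : ℂ) * ∑ x, S d x * (starRingEnd ℂ) (S c x) := by
        simp_rw [hunitary]
    _ = ∑ x, (∑ d, (N a b d : ℂ) * S d x) * (starRingEnd ℂ) (S c x) := by
        simp_rw [Finset.sum_mul, Finset.mul_sum, mul_assoc]
        exact Finset.sum_comm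
    _ = ∑ x, S a x * S b x * S (bar c) x / S one x := by
        refine Finset.sum_congr rfl fun x _ => ?_
        rw [hfus, hbar]
        ring
end

section
/- Suppose: N_{ab}^1 = δ_{b,ā} for all a, b; d : 𝒞 → ℝ satisfies d_a > 0, d_1 = 1 and d_{ā} = d_a for all a; 𝒟 = √(∑_a d_a²); and f : 𝒞 → 𝒞 → ℂ satisfies f_{ab} = f_{ba}, f_{ab} = conj(f_{āb}), f_{a1} = 1, the splitting relation ∑_c (N_{ab}^c d_c/(d_a d_b)) · f_{cx} = f_{ax} f_{bx} for all a, b, x, and the vacuum condition ∑_b (d_b²/𝒟²) f_{ab} = δ_{a,1} for all a. Define S_{ab} := (d_a d_b/𝒟) · f_{ab}. Then S is unitary (∑_x S_{ax} conj(S_{bx}) = δ_{a,b}) and the Verlinde formula holds: (N_{ab}^c : ℂ) = ∑_x S_{ax} S_{bx} S_{c̄x} / S_{1x} for all a, b, c. -/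
/-! With the weights `w x = d x ^ 2 / 𝒟 ^ 2`, the vacuum condition says `∑ x, w x * f c x = δ c 1`.
Expanding `f p x * f q x` by the splitting relation therefore gives the orthogonality relation
`∑ x, w x * f p x * f q x = N p q 1 * d 1 / (d p * d q) = δ q (bar p) / (d p * d q)`, which is
unitarity of `S` because `conj (f b x) = f (bar b) x`. Expanding a triple product once more and
applying orthogonality to the remaining pair leaves only the fusion channel `e = c`: this is the
Verlinde formula. -/

open Finset ComplexConjugate

section Orthogonality

variable {𝒞 : Type*} [Fintype 𝒞] {one : 𝒞} {bar : 𝒞 → 𝒞} {N : 𝒞 → 𝒞 → 𝒞 → ℕ}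
  {d : 𝒞 → ℝ} {f : 𝒞 → 𝒞 → ℂ} {w : 𝒞 → ℂ}

theorem sum_weight_mul_mul_eq_sum_fusion
    (hsplit : ∀ a b x,
      ∑ c, (((N a b c : ℝ) * d c / (d a * d b) : ℝ) : ℂ) * f c x = f a x * f b x)
    (g : 𝒞 → ℂ) (p q : 𝒞) :
    ∑ x, w x * (f p x * f q x * g x) =
      ∑ e, (((N p q e : ℝ) * d e / (d p * d q) : ℝ) : ℂ) * ∑ x, w x * (f e x * g x) := by
  simp_rw [← hsplit p q, sum_mul, mul_sum]
  rw [sum_comm]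
  exact sum_congr rfl fun _ _ => sum_congr rfl fun _ _ => by ring

variable [DecidableEq 𝒞]

theorem sum_weight_mul_mul
    (hsplit : ∀ a b x,
      ∑ c, (((N a b c : ℝ) * d c / (d a * d b) : ℝ) : ℂ) * f c x = f a x * f b x)
    (hvac : ∀ a, ∑ x, w x * f a x = if a = one then 1 else 0)
    (hN_vac : ∀ a b, N a b one = if b = bar a then 1 else 0) (hd_one : d one = 1) (p q : 𝒞) :
    ∑ x, w x * (f p x * f q x) = if q = bar p then (((d p * d q)⁻¹ : ℝ) : ℂ) else 0 := by
  have hexpand := sum_weight_mul_mul_eq_sum_fusion (w := w) hsplit (fun _ => 1) p q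
  simp only [mul_one] at hexpand
  simp_rw [hexpand, hvac, mul_ite, mul_one, mul_zero, sum_ite_eq', mem_univ, if_true, hN_vac, hd_one]
  split_ifs <;> simp

theorem sum_weight_mul_mul_mul_bar
    (hsplit : ∀ a b x,
      ∑ c, (((N a b c : ℝ) * d c / (d a * d b) : ℝ) : ℂ) * f c x = f a x * f b x)
    (hvac : ∀ a, ∑ x, w x * f a x = if a = one then 1 else 0)
    (hN_vac : ∀ a b, N a b one = if b = bar a then 1 else 0) (hd_one : d one = 1)
    (hbar_invol : ∀ a, bar (bar a) = a) (hd_ne : ∀ a, d a ≠ 0) (a b c : 𝒞) :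
    ∑ x, w x * (f a x * f b x * f (bar c) x) = ((N a b c / (d a * d b * d (bar c)) : ℝ) : ℂ) := by
  have hbar_inj : Function.Injective bar := Function.LeftInverse.injective hbar_invol
  simp_rw [sum_weight_mul_mul_eq_sum_fusion hsplit,
    sum_weight_mul_mul hsplit hvac hN_vac hd_one, hbar_inj.eq_iff, mul_ite, mul_zero]
  rw [sum_ite_eq univ c, if_pos (mem_univ c)]
  have : (d c : ℂ) ≠ 0 := by exact_mod_cast hd_ne c
  push_cast
  field_simp

end Orthogonality

section SMatrix

variable {𝒞 : Type*} [Fintype 𝒞] [DecidableEq 𝒞] {one : 𝒞} {bar : 𝒞 → 𝒞}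
  {N : 𝒞 → 𝒞 → 𝒞 → ℕ} {d : 𝒞 → ℝ} {𝒟 : ℝ} {f : 𝒞 → 𝒞 → ℂ} {S : 𝒞 → 𝒞 → ℂ}

theorem sum_mul_conj_eq_ite
    (hbar_invol : ∀ a, bar (bar a) = a)
    (hN_vac : ∀ a b, N a b one = if b = bar a then 1 else 0)
    (hd_ne : ∀ a, d a ≠ 0) (hd_one : d one = 1) (hd_bar : ∀ a, d (bar a) = d a) (h𝒟 : 𝒟 ≠ 0)
    (hf_conj : ∀ a b, f a b = conj (f (bar a) b))
    (hsplit : ∀ a b x,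
      ∑ c, (((N a b c : ℝ) * d c / (d a * d b) : ℝ) : ℂ) * f c x = f a x * f b x)
    (hvac : ∀ a, ∑ b, ((d b ^ 2 / 𝒟 ^ 2 : ℝ) : ℂ) * f a b = if a = one then 1 else 0)
    (hS : ∀ a b, S a b = ((d a * d b / 𝒟 : ℝ) : ℂ) * f a b) (a b : 𝒞) :
    ∑ x, S a x * conj (S b x) = if a = b then 1 else 0 := by
  have hterm x : S a x * conj (S b x) =
      ((d a * d b : ℝ) : ℂ) * (((d x ^ 2 / 𝒟 ^ 2 : ℝ) : ℂ) * (f a x * f (bar b) x)) := by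
    rw [hS, hS, map_mul, Complex.conj_ofReal, hf_conj (bar b), hbar_invol]
    push_cast
    field_simp [h𝒟]
  rw [sum_congr rfl fun x _ => hterm x, ← mul_sum, sum_weight_mul_mul hsplit hvac hN_vac hd_one]
  by_cases hab : a = b
  · subst hab
    have : (d a : ℂ) ≠ 0 := by exact_mod_cast hd_ne a
    simp only [hd_bar, if_true]
    push_cast
    field_simp
  · simp [(Function.LeftInverse.injective hbar_invol).eq_iff, Ne.symm hab, hab]

theorem natCast_fusion_eq_sum_S
    (hbar_invol : ∀ a, bar (bar a) = a)
    (hN_vac : ∀ a b, N a b one = if b = bar a then 1 else 0)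
    (hd_ne : ∀ a, d a ≠ 0) (hd_one : d one = 1) (h𝒟 : 𝒟 ≠ 0)
    (hf_one : ∀ x, f one x = 1)
    (hsplit : ∀ a b x,
      ∑ c, (((N a b c : ℝ) * d c / (d a * d b) : ℝ) : ℂ) * f c x = f a x * f b x)
    (hvac : ∀ a, ∑ b, ((d b ^ 2 / 𝒟 ^ 2 : ℝ) : ℂ) * f a b = if a = one then 1 else 0)
    (hS : ∀ a b, S a b = ((d a * d b / 𝒟 : ℝ) : ℂ) * f a b) (a b c : 𝒞) :
    (N a b c : ℂ) = ∑ x, S a x * S b x * S (bar c) x / S one x := by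
  have hterm x : S a x * S b x * S (bar c) x / S one x =
      ((d a * d b * d (bar c) : ℝ) : ℂ) *
        (((d x ^ 2 / 𝒟 ^ 2 : ℝ) : ℂ) * (f a x * f b x * f (bar c) x)) := by
    have := hd_ne x
    rw [hS, hS, hS, hS, hd_one, hf_one]
    push_cast
    field_simp [h𝒟]
  rw [sum_congr rfl fun x _ => hterm x, ← mul_sum,
    sum_weight_mul_mul_mul_bar hsplit hvac hN_vac hd_one hbar_invol hd_ne, ← Complex.ofReal_mul,
    mul_div_cancel₀ _ (mul_ne_zero (mul_ne_zero (hd_ne a) (hd_ne b)) (hd_ne _)),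
    Complex.ofReal_natCast]

end SMatrix

theorem verlinde_stmt7_general {𝒞 : Type*} [Fintype 𝒞] [DecidableEq 𝒞]
    (one : 𝒞) (bar : 𝒞 → 𝒞)
    (hbar_invol : ∀ a, bar (bar a) = a)
    (N : 𝒞 → 𝒞 → 𝒞 → ℕ)
    (hN_vac : ∀ a b, N a b one = if b = bar a then 1 else 0)
    (d : 𝒞 → ℝ) (hd_pos : ∀ a, 0 < d a) (hd_one : d one = 1)
    (hd_bar : ∀ a, d (bar a) = d a)
    (𝒟 : ℝ)
    (f : 𝒞 → 𝒞 → ℂ)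
    (hf_sym : ∀ a b, f a b = f b a)
    (hf_conj : ∀ a b, f a b = (starRingEnd ℂ) (f (bar a) b))
    (hf_one : ∀ a, f a one = 1)
    (hsplit : ∀ a b x,
      ∑ c, (((N a b c : ℝ) * d c / (d a * d b) : ℝ) : ℂ) * f c x = f a x * f b x)
    (hvac : ∀ a, ∑ b, ((d b ^ 2 / 𝒟 ^ 2 : ℝ) : ℂ) * f a b = if a = one then 1 else 0)
    (S : 𝒞 → 𝒞 → ℂ)
    (hS : ∀ a b, S a b = ((d a * d b / 𝒟 : ℝ) : ℂ) * f a b) :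
    (∀ a b, ∑ x, S a x * (starRingEnd ℂ) (S b x) = if a = b then 1 else 0) ∧
    (∀ a b c, (N a b c : ℂ) = ∑ x, S a x * S b x * S (bar c) x / S one x) := by
  -- with `𝒟 = 0` all weights are `x / 0 = 0`, against the vacuum condition at `one`
  have h𝒟 : 𝒟 ≠ 0 := by
    rintro rfl
    simpa using hvac one
  have hd_ne a : d a ≠ 0 := (hd_pos a).ne'
  exact ⟨sum_mul_conj_eq_ite hbar_invol hN_vac hd_ne hd_one hd_bar h𝒟 hf_conj hsplit hvac hS,
    natCast_fusion_eq_sum_S hbar_invol hN_vac hd_ne hd_one h𝒟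
      (fun x => (hf_sym one x).trans (hf_one x)) hsplit hvac hS⟩

/-- From the axioms of the paper (positive quantum dimensions with
`d 1 = 1` and `d (bar a) = d a`, `N a b 1 = δ_{b, bar a}`, total quantum
dimension `𝒟`, and `f` symmetric, conjugation-covariant, normalized, satisfying
the splitting relation and the vacuum condition), the matrix
`S a b = (d a * d b / 𝒟) * f a b` is unitary and satisfies the Verlinde formula. -/
theorem verlinde_stmt7 {𝒞 : Type*} [Fintype 𝒞] [DecidableEq 𝒞]
    (one : 𝒞) (bar : 𝒞 → 𝒞)
    (hbar_one : bar one = one) (hbar_invol : ∀ a, bar (bar a) = a)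
    (N : 𝒞 → 𝒞 → 𝒞 → ℕ)
    (hN_vac : ∀ a b, N a b one = if b = bar a then 1 else 0)
    (d : 𝒞 → ℝ) (hd_pos : ∀ a, 0 < d a) (hd_one : d one = 1)
    (hd_bar : ∀ a, d (bar a) = d a)
    (𝒟 : ℝ) (h𝒟 : 𝒟 = Real.sqrt (∑ a, d a ^ 2))
    (f : 𝒞 → 𝒞 → ℂ)
    (hf_sym : ∀ a b, f a b = f b a)
    (hf_conj : ∀ a b, f a b = (starRingEnd ℂ) (f (bar a) b))
    (hf_one : ∀ a, f a one = 1)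
    (hsplit : ∀ a b x,
      ∑ c, (((N a b c : ℝ) * d c / (d a * d b) : ℝ) : ℂ) * f c x = f a x * f b x)
    (hvac : ∀ a, ∑ b, ((d b ^ 2 / 𝒟 ^ 2 : ℝ) : ℂ) * f a b = if a = one then 1 else 0)
    (S : 𝒞 → 𝒞 → ℂ)
    (hS : ∀ a b, S a b = ((d a * d b / 𝒟 : ℝ) : ℂ) * f a b) :
    (∀ a b, ∑ x, S a x * (starRingEnd ℂ) (S b x) = if a = b then 1 else 0) ∧
    (∀ a b c, (N a b c : ℂ) = ∑ x, S a x * S b x * S (bar c) x / S one x) :=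
  verlinde_stmt7_general one bar hbar_invol N hN_vac d hd_pos hd_one hd_bar 𝒟 f hf_sym hf_conj
    hf_one hsplit hvac S hS
end

section
/- Define the multi-fold fusion multiplicity of a list of sectors recursively by N_{[]}^c := δ_{c,1} and N_{a::L}^c := ∑_i N_{L}^i N_{ai}^c. Then for every nonempty list L = [a₁, …, aₙ] (n ≥ 1) and every c ∈ 𝒞, the generalized Verlinde formula holds: (N_{L}^c : ℂ) = ∑_x (∏_{i=1}^{n} S_{aᵢ x}) · S_{c̄x} / S_{1x}^{n-1}. -/
/-!
Fusing with `a` multiplies the character `i ↦ S i x` by the eigenvalue `S a x / S 1 x`, so the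
`S`-transform of `N_L^·` is `S 1 x · ∏_{a ∈ L} (S a x / S 1 x)`. The vacuum row orthogonality together
with the fusion rule `N_{ab}^1 = δ_{b,ā}` says that `∑_x S a x S (bar c) x = δ_{a,c}`, which inverts
this transform.
-/

/-- Multi-fold fusion multiplicity of a list of sectors:
`Nlist [] c = δ_{c,1}` and `Nlist (a :: L) c = ∑ i, Nlist L i * N a i c`. -/
def Nlist {𝒞 : Type*} [Fintype 𝒞] [DecidableEq 𝒞] (one : 𝒞)
    (N : 𝒞 → 𝒞 → 𝒞 → ℕ) : List 𝒞 → 𝒞 → ℕ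
  | [], c => if c = one then 1 else 0
  | a :: L, c => ∑ i, Nlist one N L i * N a i c

section Verlinde

open Finset

variable {𝒞 : Type*} [Fintype 𝒞] [DecidableEq 𝒞] {one : 𝒞} {N : 𝒞 → 𝒞 → 𝒞 → ℕ}
  {S : 𝒞 → 𝒞 → ℂ}

theorem sum_S_mul_S_eq_N_one (hS_nd : ∀ x, S one x ≠ 0)
    (hfus : ∀ a b x, ∑ c, (N a b c : ℂ) * S c x = S a x * S b x / S one x)
    (hvac : ∀ a, ∑ x, S one x * S a x = if a = one then 1 else 0) (a b : 𝒞) :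
    ∑ x, S a x * S b x = N a b one :=
  calc ∑ x, S a x * S b x
      = ∑ x, S one x * ∑ c, (N a b c : ℂ) * S c x := by
        refine sum_congr rfl fun x _ => ?_
        rw [hfus, mul_div_cancel₀ _ (hS_nd x)]
    _ = ∑ c, (N a b c : ℂ) * ∑ x, S one x * S c x := by
        simp only [mul_sum]
        rw [sum_comm]
        exact sum_congr rfl fun c _ => sum_congr rfl fun x _ => by ring
    _ = N a b one := by simp [hvac]

theorem sum_S_mul_S_bar {bar : 𝒞 → 𝒞} (hbar_invol : Function.Involutive bar)
    (hN_vac : ∀ a b, N a b one = if b = bar a then 1 else 0) (hS_nd : ∀ x, S one x ≠ 0)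
    (hfus : ∀ a b x, ∑ c, (N a b c : ℂ) * S c x = S a x * S b x / S one x)
    (hvac : ∀ a, ∑ x, S one x * S a x = if a = one then 1 else 0) (a c : 𝒞) :
    ∑ x, S a x * S (bar c) x = if a = c then 1 else 0 := by
  rw [sum_S_mul_S_eq_N_one hS_nd hfus hvac, hN_vac]
  simp [hbar_invol.injective.eq_iff, eq_comm]

theorem sum_Nlist_mul_S
    (hfus : ∀ a b x, ∑ c, (N a b c : ℂ) * S c x = S a x * S b x / S one x)
    (L : List 𝒞) (x : 𝒞) :
    ∑ i, (Nlist one N L i : ℂ) * S i x = (L.map fun a => S a x / S one x).prod * S one x := by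
  induction L with
  | nil => simp [Nlist]
  | cons a L ih =>
    calc ∑ i, (Nlist one N (a :: L) i : ℂ) * S i x
        = ∑ j, (Nlist one N L j : ℂ) * ∑ i, (N a j i : ℂ) * S i x := by
          simp only [Nlist, Nat.cast_sum, Nat.cast_mul, sum_mul, mul_sum]
          rw [sum_comm]
          exact sum_congr rfl fun j _ => sum_congr rfl fun i _ => by ring
      _ = S a x / S one x * ∑ j, (Nlist one N L j : ℂ) * S j x := by
          rw [mul_sum]
          refine sum_congr rfl fun j _ => ?_
          rw [hfus]
          ring
      _ = ((a :: L).map fun b => S b x / S one x).prod * S one x := by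
          rw [ih, List.map_cons, List.prod_cons, mul_assoc]

theorem Nlist_eq_sum {bar : 𝒞 → 𝒞} (hbar_invol : Function.Involutive bar)
    (hN_vac : ∀ a b, N a b one = if b = bar a then 1 else 0) (hS_nd : ∀ x, S one x ≠ 0)
    (hfus : ∀ a b x, ∑ c, (N a b c : ℂ) * S c x = S a x * S b x / S one x)
    (hvac : ∀ a, ∑ x, S one x * S a x = if a = one then 1 else 0) (L : List 𝒞) (c : 𝒞) :
    (Nlist one N L c : ℂ)
      = ∑ x, (L.map fun a => S a x / S one x).prod * S one x * S (bar c) x :=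
  calc (Nlist one N L c : ℂ)
      = ∑ i, (Nlist one N L i : ℂ) * ∑ x, S i x * S (bar c) x := by
        simp [sum_S_mul_S_bar hbar_invol hN_vac hS_nd hfus hvac]
    _ = ∑ x, (∑ i, (Nlist one N L i : ℂ) * S i x) * S (bar c) x := by
        simp only [mul_sum, sum_mul]
        rw [sum_comm]
        exact sum_congr rfl fun x _ => sum_congr rfl fun i _ => by ring
    _ = _ := by simp only [sum_Nlist_mul_S hfus]

theorem prod_map_div_mul_eq_div_pow {ι K : Type*} [Field K] {L : List ι} (hL : L ≠ [])
    (f : ι → K) {s : K} (hs : s ≠ 0) :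
    (L.map fun a => f a / s).prod * s = (L.map f).prod / s ^ (L.length - 1) := by
  have hlen : 1 ≤ L.length := List.length_pos_iff.mpr hL
  rw [← Multiset.prod_coe, ← Multiset.map_coe, Multiset.prod_map_div]
  simp only [Multiset.map_coe, Multiset.prod_coe, List.map_const', List.prod_replicate]
  rw [pow_sub₀ _ hs hlen, pow_one, ← div_eq_mul_inv, div_div_eq_mul_div, div_mul_eq_mul_div]

end Verlinde

theorem verlinde_stmt10_general {𝒞 : Type*} [Fintype 𝒞] [DecidableEq 𝒞]
    (one : 𝒞) (bar : 𝒞 → 𝒞)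
    (hbar_invol : ∀ a, bar (bar a) = a)
    (N : 𝒞 → 𝒞 → 𝒞 → ℕ)
    (hN_vac : ∀ a b, N a b one = if b = bar a then 1 else 0)
    (S : 𝒞 → 𝒞 → ℂ)
    (hS_nd : ∀ x, S one x ≠ 0)
    (hfus : ∀ a b x, ∑ c, (N a b c : ℂ) * S c x = S a x * S b x / S one x)
    (hvac : ∀ a, ∑ x, S one x * S a x = if a = one then 1 else 0) :
    ∀ L : List 𝒞, L ≠ [] → ∀ c,
      (Nlist one N L c : ℂ)
        = ∑ x, (L.map fun a => S a x).prod * S (bar c) x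
            / (S one x) ^ (L.length - 1) := by
  intro L hL c
  rw [Nlist_eq_sum hbar_invol hN_vac hS_nd hfus hvac]
  refine Finset.sum_congr rfl fun x _ => ?_
  rw [prod_map_div_mul_eq_div_pow hL _ (hS_nd x), div_mul_eq_mul_div]

/-- generalized Verlinde formula for a nonempty list of sectors:
`Nlist L c = ∑ x, (∏_{a ∈ L} S a x) * S (bar c) x / (S 1 x) ^ (L.length - 1)`. -/
theorem verlinde_stmt10 {𝒞 : Type*} [Fintype 𝒞] [DecidableEq 𝒞]
    (one : 𝒞) (bar : 𝒞 → 𝒞)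
    (hbar_one : bar one = one) (hbar_invol : ∀ a, bar (bar a) = a)
    (N : 𝒞 → 𝒞 → 𝒞 → ℕ)
    (hN_vac : ∀ a b, N a b one = if b = bar a then 1 else 0)
    (S : 𝒞 → 𝒞 → ℂ)
    (hS_sym : ∀ a b, S a b = S b a)
    (hS_conj : ∀ a b, S a b = (starRingEnd ℂ) (S (bar a) b))
    (hS_nd : ∀ x, S one x ≠ 0)
    (hfus : ∀ a b x, ∑ c, (N a b c : ℂ) * S c x = S a x * S b x / S one x)
    (hvac : ∀ a, ∑ x, S one x * S a x = if a = one then 1 else 0) :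
    ∀ L : List 𝒞, L ≠ [] → ∀ c,
      (Nlist one N L c : ℂ)
        = ∑ x, (L.map fun a => S a x).prod * S (bar c) x
            / (S one x) ^ (L.length - 1) :=
  verlinde_stmt10_general one bar hbar_invol N hN_vac S hS_nd hfus hvac
end

section
/- The fusion matrices commute: for all a, b, c, d ∈ 𝒞, ∑_i N_{ac}^i N_{bi}^d = ∑_i N_{bc}^i N_{ai}^d. -/
/-!
By Proposition 1 the columns `x ↦ S c x` of `S` are common eigenvectors of all fusion matrices
`(N_a)_{bc} = N_{ab}^c`, with eigenvalues `S_{ax} / S_{1x}`; that is, `N_a S = S D_a` with `D_a`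
diagonal. Combining Proposition 1 with vacuum orthogonality gives `∑_x S_{ax} S_{bx} = N_{ab}^1`,
so `S Sᵀ` is the permutation matrix of charge conjugation and `S` is invertible. Hence all `N_a`
are simultaneously diagonalised by `S`, and commute because the `D_a` do.
-/

open Matrix

theorem SemiconjBy.commute_of_isUnit {M : Type*} [Monoid M] {s x y a b : M} (hs : IsUnit s)
    (ha : SemiconjBy s x a) (hb : SemiconjBy s y b) (hxy : Commute x y) : Commute a b :=
  hs.mul_right_cancel <| by
    rw [← (ha.mul_right hb).eq, ← (hb.mul_right ha).eq, hxy.eq]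

theorem Equiv.Perm.isUnit_permMatrix {n R : Type*} [DecidableEq n] [Fintype n] [CommRing R]
    (σ : Equiv.Perm n) : IsUnit (σ.permMatrix R) := by
  rw [isUnit_iff_isUnit_det, det_permutation]
  exact (Perm.sign σ).isUnit.map (Int.castRingHom R)

namespace Verlinde

variable {𝒞 : Type*} [Fintype 𝒞] [DecidableEq 𝒞]

def fusionMatrix (N : 𝒞 → 𝒞 → 𝒞 → ℕ) (a : 𝒞) : Matrix 𝒞 𝒞 ℂ := of fun b c => (N a b c : ℂ)

variable {one : 𝒞} {N : 𝒞 → 𝒞 → 𝒞 → ℕ} {S : 𝒞 → 𝒞 → ℂ}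

theorem fusionMatrix_semiconjBy
    (hfus : ∀ a b x, ∑ c, (N a b c : ℂ) * S c x = S a x * S b x / S one x) (a : 𝒞) :
    SemiconjBy (of S) (diagonal fun x => S a x / S one x) (fusionMatrix N a) := by
  ext b x
  rw [mul_diagonal, mul_apply]
  simp only [fusionMatrix, of_apply, hfus]
  ring

theorem sum_S_mul_S_eq_N_one (hS_nd : ∀ x, S one x ≠ 0)
    (hfus : ∀ a b x, ∑ c, (N a b c : ℂ) * S c x = S a x * S b x / S one x)
    (hvac : ∀ a, ∑ x, S one x * S a x = if a = one then 1 else 0) (a b : 𝒞) :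
    ∑ x, S a x * S b x = N a b one := by
  calc ∑ x, S a x * S b x
      = ∑ x, S one x * ∑ c, (N a b c : ℂ) * S c x := by
        refine Finset.sum_congr rfl fun x _ => ?_
        rw [hfus, mul_div_cancel₀ _ (hS_nd x)]
    _ = ∑ c, (N a b c : ℂ) * ∑ x, S one x * S c x := by
        simp only [Finset.mul_sum]
        rw [Finset.sum_comm]
        exact Finset.sum_congr rfl fun _ _ => Finset.sum_congr rfl fun _ _ => by ring
    _ = N a b one := by simp [hvac]

theorem isUnit_S {bar : 𝒞 → 𝒞} (hbar : Function.Involutive bar)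
    (hN_vac : ∀ a b, N a b one = if b = bar a then 1 else 0)
    (hS_nd : ∀ x, S one x ≠ 0)
    (hfus : ∀ a b x, ∑ c, (N a b c : ℂ) * S c x = S a x * S b x / S one x)
    (hvac : ∀ a, ∑ x, S one x * S a x = if a = one then 1 else 0) :
    IsUnit (of S) := by
  have : of S * (of S)ᵀ = (hbar.toPerm bar).permMatrix ℂ := by
    ext a b
    simp [mul_apply, sum_S_mul_S_eq_N_one hS_nd hfus hvac, hN_vac, PEquiv.toMatrix_apply, eq_comm]
  exact isUnit_of_mul_isUnit_left (this ▸ Equiv.Perm.isUnit_permMatrix _)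

theorem commute_fusionMatrix {bar : 𝒞 → 𝒞} (hbar : Function.Involutive bar)
    (hN_vac : ∀ a b, N a b one = if b = bar a then 1 else 0)
    (hS_nd : ∀ x, S one x ≠ 0)
    (hfus : ∀ a b x, ∑ c, (N a b c : ℂ) * S c x = S a x * S b x / S one x)
    (hvac : ∀ a, ∑ x, S one x * S a x = if a = one then 1 else 0) (a b : 𝒞) :
    Commute (fusionMatrix N a) (fusionMatrix N b) :=
  (fusionMatrix_semiconjBy hfus a).commute_of_isUnit (isUnit_S hbar hN_vac hS_nd hfus hvac)
    (fusionMatrix_semiconjBy hfus b) (commute_diagonal _ _)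

end Verlinde

theorem verlinde_stmt12_general {𝒞 : Type*} [Fintype 𝒞] [DecidableEq 𝒞]
    (one : 𝒞) (bar : 𝒞 → 𝒞)
    (hbar_invol : ∀ a, bar (bar a) = a)
    (N : 𝒞 → 𝒞 → 𝒞 → ℕ)
    (hN_vac : ∀ a b, N a b one = if b = bar a then 1 else 0)
    (S : 𝒞 → 𝒞 → ℂ)
    (hS_nd : ∀ x, S one x ≠ 0)
    (hfus : ∀ a b x, ∑ c, (N a b c : ℂ) * S c x = S a x * S b x / S one x)
    (hvac : ∀ a, ∑ x, S one x * S a x = if a = one then 1 else 0) :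
    ∀ a b c d, ∑ i, N a c i * N b i d = ∑ i, N b c i * N a i d := by
  intro a b c d
  have h := congr_fun₂ (Verlinde.commute_fusionMatrix hbar_invol hN_vac hS_nd hfus hvac a b).eq c d
  simp only [mul_apply, Verlinde.fusionMatrix, of_apply] at h
  exact_mod_cast h

/-- Commutativity of the fusion matrices. -/
theorem verlinde_stmt12 {𝒞 : Type*} [Fintype 𝒞] [DecidableEq 𝒞]
    (one : 𝒞) (bar : 𝒞 → 𝒞)
    (hbar_one : bar one = one) (hbar_invol : ∀ a, bar (bar a) = a)
    (N : 𝒞 → 𝒞 → 𝒞 → ℕ)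
    (hN_vac : ∀ a b, N a b one = if b = bar a then 1 else 0)
    (S : 𝒞 → 𝒞 → ℂ)
    (hS_sym : ∀ a b, S a b = S b a)
    (hS_conj : ∀ a b, S a b = (starRingEnd ℂ) (S (bar a) b))
    (hS_nd : ∀ x, S one x ≠ 0)
    (hfus : ∀ a b x, ∑ c, (N a b c : ℂ) * S c x = S a x * S b x / S one x)
    (hvac : ∀ a, ∑ x, S one x * S a x = if a = one then 1 else 0) :
    ∀ a b c d, ∑ i, N a c i * N b i d = ∑ i, N b c i * N a i d :=
  verlinde_stmt12_general one bar hbar_invol N hN_vac S hS_nd hfus hvac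
end

section
/- Fusion is commutative: for all a, b, c ∈ 𝒞, N_{ab}^c = N_{ba}^c. -/
/-- Commutativity of fusion. -/
theorem verlinde_stmt15 {𝒞 : Type*} [Fintype 𝒞] [DecidableEq 𝒞]
    (one : 𝒞) (bar : 𝒞 → 𝒞)
    (hbar_one : bar one = one) (hbar_invol : ∀ a, bar (bar a) = a)
    (N : 𝒞 → 𝒞 → 𝒞 → ℕ)
    (hN_vac : ∀ a b, N a b one = if b = bar a then 1 else 0)
    (S : 𝒞 → 𝒞 → ℂ)
    (hS_sym : ∀ a b, S a b = S b a)
    (hS_conj : ∀ a b, S a b = (starRingEnd ℂ) (S (bar a) b))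
    (hS_nd : ∀ x, S one x ≠ 0)
    (hfus : ∀ a b x, ∑ c, (N a b c : ℂ) * S c x = S a x * S b x / S one x)
    (hvac : ∀ a, ∑ x, S one x * S a x = if a = one then 1 else 0) :
    ∀ a b c, N a b c = N b a c := by
  -- Orthogonality of rows
  have ortho : ∀ c d, ∑ x, S c x * S (bar d) x = if c = d then 1 else 0 := by
    intro c d
    have h1 : ∀ x, S c x * S (bar d) x = S one x * ∑ e, (N c (bar d) e : ℂ) * S e x := by
      intro x
      rw [hfus c (bar d) x]
      exact (mul_div_cancel₀ _ (hS_nd x)).symm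
    calc ∑ x, S c x * S (bar d) x
        = ∑ x, S one x * ∑ e, (N c (bar d) e : ℂ) * S e x :=
          Finset.sum_congr rfl fun x _ => h1 x
      _ = ∑ e, (N c (bar d) e : ℂ) * ∑ x, S one x * S e x := by
          simp_rw [Finset.mul_sum]
          rw [Finset.sum_comm]
          exact Finset.sum_congr rfl fun e _ => Finset.sum_congr rfl fun x _ => by ring
      _ = ∑ e, (N c (bar d) e : ℂ) * (if e = one then 1 else 0) :=
          Finset.sum_congr rfl fun e _ => by rw [hvac]
      _ = (N c (bar d) one : ℂ) := by simp
      _ = if c = d then 1 else 0 := by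
          rw [hN_vac]
          have : (bar d = bar c) ↔ (c = d) := by
            constructor
            · intro h; have := congrArg bar h; rwa [hbar_invol, hbar_invol, eq_comm] at this
            · intro h; rw [h]
          simp only [this]
          split <;> simp
  intro a b d
  have key : ∀ x, ∑ c, ((N a b c : ℂ) - (N b a c : ℂ)) * S c x = 0 := by
    intro x
    have h1 := hfus a b x
    have h2 := hfus b a x
    have hs : ∑ c, ((N a b c : ℂ) - (N b a c : ℂ)) * S c x
        = (∑ c, (N a b c : ℂ) * S c x) - ∑ c, (N b a c : ℂ) * S c x := by
      rw [← Finset.sum_sub_distrib]; exact Finset.sum_congr rfl fun c _ => by ring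
    rw [hs, h1, h2]; ring
  have final : ((N a b d : ℂ) - (N b a d : ℂ)) = 0 := by
    have h0 : ∑ x, S (bar d) x * ∑ c, ((N a b c : ℂ) - (N b a c : ℂ)) * S c x = 0 := by
      simp only [key, mul_zero, Finset.sum_const_zero]
    calc ((N a b d : ℂ) - (N b a d : ℂ))
        = ∑ c, ((N a b c : ℂ) - (N b a c : ℂ)) * (if c = d then 1 else 0) := by simp
      _ = ∑ c, ((N a b c : ℂ) - (N b a c : ℂ)) * ∑ x, S c x * S (bar d) x :=
          Finset.sum_congr rfl fun c _ => by rw [ortho]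
      _ = ∑ x, S (bar d) x * ∑ c, ((N a b c : ℂ) - (N b a c : ℂ)) * S c x := by
          simp_rw [Finset.mul_sum]
          rw [Finset.sum_comm]
          exact Finset.sum_congr rfl fun c _ => Finset.sum_congr rfl fun x _ => by ring
      _ = 0 := h0
  have : (N a b d : ℂ) = (N b a d : ℂ) := by linear_combination final
  exact_mod_cast this
end
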